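/- arXiv:2305.18440 — 4 statements merged into one kernel-verified Lean document; each statement's English description precedes it below -/
import Mathlib

section
/- Let f : ℝ^M → ℝ be continuously differentiable, let F(x, y) = f(x) − y, and let Q be a probability measure on ℝ^M × ℝ whose marginal on ℝ^M is P. Assume that (x⁰, y⁰) ↦ IG_i(x^t, y^t | x⁰, y⁰) is Q-integrable. Then the expected integrated gradient of F with respect to the i-th input coordinate, EIG_i(x^t, y^t) := ∫ IG_i(x^t, y^t | x⁰, y⁰) dQ(x⁰, y⁰), equals EIG_i(x^t), the expected integrated gradient of f with respect to P. In particular EIG_i(x^t, y^t) does not depend on y^t (EIG is deviation-agnostic). -/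
open MeasureTheory Finset

/-- Partial derivative of `f : ℝ^M → ℝ` with respect to the `i`-th coordinate. -/
noncomputable def partialDeriv' {M : ℕ} (f : (Fin M → ℝ) → ℝ) (i : Fin M) (x : Fin M → ℝ) : ℝ :=
  fderiv ℝ f x (Pi.single i 1)

/-- Integrated gradient of `f` at test point `xt` with baseline `x0`, coordinate `i`. -/
noncomputable def IG {M : ℕ} (f : (Fin M → ℝ) → ℝ) (xt x0 : Fin M → ℝ) (i : Fin M) : ℝ :=
  (xt i - x0 i) * ∫ α in (0:ℝ)..1, partialDeriv' f i (x0 + α • (xt - x0))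

/-- Expected integrated gradient of `f` with respect to a measure `P` on the baselines. -/
noncomputable def EIG {M : ℕ} (f : (Fin M → ℝ) → ℝ) (P : Measure (Fin M → ℝ))
    (xt : Fin M → ℝ) (i : Fin M) : ℝ :=
  ∫ x0, IG f xt x0 i ∂P

/-- Integrated gradient, with respect to the `i`-th input coordinate, of the deviation
function `F(x, y) = f(x) - y` along the straight-line path from `(x0, y0)` to `(xt, yt)`. -/
noncomputable def IGdev {M : ℕ} (f : (Fin M → ℝ) → ℝ) (xt x0 : Fin M → ℝ) (yt y0 : ℝ)
    (i : Fin M) : ℝ :=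
  (xt i - x0 i) * ∫ α in (0:ℝ)..1,
    fderiv ℝ (fun p : (Fin M → ℝ) × ℝ => f p.1 - p.2)
      (x0 + α • (xt - x0), y0 + α * (yt - y0)) (Pi.single i 1, 0)

/-! The deviation `y` enters `F(x, y) = f(x) - y` linearly and independently of `x`, so the
`x`-directional derivatives of `F` are those of `f` and the integrated gradients of `F` and `f`
agree pointwise. The `Q`-integral of a function of `x⁰` alone is its integral against the
marginal `P`; continuity of `x⁰ ↦ IG` supplies the measurability this change of variables needs.
-/

theorem fderiv_comp_fst_sub_snd_apply_inl {𝕜 E F : Type*} [NontriviallyNormedField 𝕜]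
    [NormedAddCommGroup E] [NormedSpace 𝕜 E] [NormedAddCommGroup F] [NormedSpace 𝕜 F]
    {f : E → F} {q : E × F} (hf : DifferentiableAt 𝕜 f q.1) (v : E) :
    fderiv 𝕜 (fun p : E × F => f p.1 - p.2) q (v, 0) = fderiv 𝕜 f q.1 v := by
  have hF : HasFDerivAt (fun p : E × F => f p.1 - p.2)
      ((fderiv 𝕜 f q.1).comp (.fst 𝕜 E F) - .snd 𝕜 E F) q :=
    (hf.hasFDerivAt.comp q hasFDerivAt_fst).sub hasFDerivAt_snd
  simp [hF.fderiv]

theorem IGdev_eq_IG {M : ℕ} {f : (Fin M → ℝ) → ℝ} (hf : Differentiable ℝ f)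
    (xt x0 : Fin M → ℝ) (yt y0 : ℝ) (i : Fin M) :
    IGdev f xt x0 yt y0 i = IG f xt x0 i := by
  unfold IGdev IG partialDeriv'
  congr 1
  refine intervalIntegral.integral_congr fun α _ => ?_
  exact fderiv_comp_fst_sub_snd_apply_inl (hf _) _

theorem continuous_IG {M : ℕ} {f : (Fin M → ℝ) → ℝ} (hf : ContDiff ℝ 1 f)
    (xt : Fin M → ℝ) (i : Fin M) : Continuous fun x0 => IG f xt x0 i := by
  have hpath : Continuous (Function.uncurry fun (x0 : Fin M → ℝ) (α : ℝ) =>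
      partialDeriv' f i (x0 + α • (xt - x0))) :=
    ((hf.continuous_fderiv one_ne_zero).comp (by fun_prop)).clm_apply continuous_const
  exact (continuous_const.sub (continuous_apply i)).mul
    (intervalIntegral.continuous_parametric_intervalIntegral_of_continuous' hpath 0 1)

theorem eig_deviation_agnostic_general {M : ℕ} (f : (Fin M → ℝ) → ℝ) (hf : ContDiff ℝ 1 f)
    (Q : Measure ((Fin M → ℝ) × ℝ))
    (P : Measure (Fin M → ℝ)) (hP : P = Q.map Prod.fst)
    (xt : Fin M → ℝ) (yt : ℝ) (i : Fin M) :
    (∫ p : (Fin M → ℝ) × ℝ, IGdev f xt p.1 yt p.2 i ∂Q) = EIG f P xt i := by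
  simp only [IGdev_eq_IG (hf.differentiable one_ne_zero)]
  rw [EIG, hP, integral_map measurable_fst.aemeasurable
    (continuous_IG hf xt i).aestronglyMeasurable]

/-- the expected integrated gradient of the deviation function
`F(x, y) = f(x) − y` with respect to a joint probability measure `Q` equals the expected
integrated gradient of `f` with respect to the marginal `P` of `Q` on `ℝ^M`;
in particular it does not depend on `yt` (EIG is deviation-agnostic). -/
theorem eig_deviation_agnostic {M : ℕ} (f : (Fin M → ℝ) → ℝ) (hf : ContDiff ℝ 1 f)
    (Q : Measure ((Fin M → ℝ) × ℝ)) [IsProbabilityMeasure Q]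
    (P : Measure (Fin M → ℝ)) (hP : P = Q.map Prod.fst)
    (xt : Fin M → ℝ) (yt : ℝ) (i : Fin M)
    (hint : Integrable (fun p : (Fin M → ℝ) × ℝ => IGdev f xt p.1 yt p.2 i) Q) :
    (∫ p : (Fin M → ℝ) × ℝ, IGdev f xt p.1 yt p.2 i ∂Q) = EIG f P xt i :=
  eig_deviation_agnostic_general f hf Q P hP xt yt i
end

section
/- Let f : ℝ^M → ℝ be a quadratic polynomial, f(x) = c + bᵀx + ½ xᵀA x with A a symmetric M×M real matrix and b ∈ ℝ^M, and let P be a probability measure on ℝ^M with finite second moments. Then for every test point x^t ∈ ℝ^M and every i ∈ {1,…,M}, the Shapley value equals the expected integrated gradient: SV_i(x^t) = EIG_i(x^t). (This is the precise form of the statement that the Shapley value is equivalent to the expected integrated gradient up to second order.) -/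
open MeasureTheory Finset

def subst {M : ℕ} (xt x : Fin M → ℝ) (T : Finset (Fin M)) : Fin M → ℝ :=
  fun j => if j ∈ T then xt j else x j

/-- Conditional expectation `⟨f | x_T^t⟩ = ∫ f(z) dP(x)` with `z_j = x_j^t` for `j ∈ T`. -/
noncomputable def condSub {M : ℕ} (f : (Fin M → ℝ) → ℝ) (P : Measure (Fin M → ℝ))
    (xt : Fin M → ℝ) (T : Finset (Fin M)) : ℝ :=
  ∫ x, f (subst xt x T) ∂P

noncomputable def SV {M : ℕ} (f : (Fin M → ℝ) → ℝ) (P : Measure (Fin M → ℝ))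
    (xt : Fin M → ℝ) (i : Fin M) : ℝ :=
  (1 / (M : ℝ)) * ∑ k ∈ range M, ((M - 1).choose k : ℝ)⁻¹ *
    ∑ S ∈ ((univ : Finset (Fin M)).erase i).powersetCard k,
      (condSub f P xt (insert i S) - condSub f P xt S)

noncomputable def quadf {M : ℕ} (c : ℝ) (b : Fin M → ℝ) (A : Matrix (Fin M) (Fin M) ℝ)
    (x : Fin M → ℝ) : ℝ :=
  c + ∑ i : Fin M, b i * x i + (1 / 2) * ∑ i : Fin M, ∑ j : Fin M, x i * A i j * x j

open Matrix

section ShapleyMean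

variable {α : Type*} (t : Finset α)

noncomputable def shapleyMean (g : Finset α → ℝ) : ℝ :=
  ((#t + 1 : ℕ) : ℝ)⁻¹ * ∑ k ∈ range (#t + 1), ((#t).choose k : ℝ)⁻¹ *
    ∑ S ∈ t.powersetCard k, g S

variable {t}

lemma shapleyMean_congr {g h : Finset α → ℝ} (hgh : ∀ S ⊆ t, g S = h S) :
    shapleyMean t g = shapleyMean t h := by
  unfold shapleyMean
  congr 1
  refine sum_congr rfl fun k _ => ?_
  congr 1
  exact sum_congr rfl fun S hS => hgh S (mem_powersetCard.1 hS).1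

lemma shapleyMean_add (g h : Finset α → ℝ) :
    shapleyMean t (fun S => g S + h S) = shapleyMean t g + shapleyMean t h := by
  simp only [shapleyMean, sum_add_distrib, mul_add]

lemma shapleyMean_const (a : ℝ) : shapleyMean t (fun _ => a) = a := by
  have hterm : ∀ k ∈ range (#t + 1), ((#t).choose k : ℝ)⁻¹ * ∑ _S ∈ t.powersetCard k, a = a := by
    intro k hk
    have : ((#t).choose k : ℝ) ≠ 0 :=
      Nat.cast_ne_zero.2 (Nat.choose_pos (Nat.lt_succ_iff.1 (mem_range.1 hk))).ne'
    rw [sum_const, card_powersetCard, nsmul_eq_mul, inv_mul_cancel_left₀ this]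
  rw [shapleyMean, sum_congr rfl hterm, sum_const, card_range, nsmul_eq_mul,
    inv_mul_cancel_left₀ (by positivity)]

lemma sum_powersetCard_sdiff [DecidableEq α] {k : ℕ} (hk : k ≤ #t) (g : Finset α → ℝ) :
    ∑ S ∈ t.powersetCard k, g (t \ S) = ∑ S ∈ t.powersetCard (#t - k), g S := by
  refine sum_nbij' (t \ ·) (t \ ·) ?_ ?_ ?_ ?_ fun _ _ => rfl
  · intro S hS
    rw [mem_powersetCard] at hS ⊢
    exact ⟨sdiff_subset, by rw [card_sdiff_of_subset hS.1, hS.2]⟩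
  · intro S hS
    rw [mem_powersetCard] at hS ⊢
    refine ⟨sdiff_subset, ?_⟩
    rw [card_sdiff_of_subset hS.1, hS.2]
    omega
  · intro S hS
    exact Finset.sdiff_sdiff_eq_self (mem_powersetCard.1 hS).1
  · intro S hS
    exact Finset.sdiff_sdiff_eq_self (mem_powersetCard.1 hS).1

lemma shapleyMean_comp_sdiff [DecidableEq α] (g : Finset α → ℝ) :
    shapleyMean t (fun S => g (t \ S)) = shapleyMean t g := by
  unfold shapleyMean
  congr 1
  conv_rhs => rw [← sum_range_reflect]
  refine sum_congr rfl fun k hkr => ?_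
  have hk : k ≤ #t := Nat.lt_succ_iff.1 (mem_range.1 hkr)
  rw [sum_powersetCard_sdiff hk, Nat.add_sub_cancel, Nat.choose_symm hk]

lemma shapleyMean_const_add_sum [DecidableEq α] (a : ℝ) (d : α → ℝ) :
    shapleyMean t (fun S => a + ∑ j ∈ S, d j) = a + (∑ j ∈ t, d j) / 2 := by
  set g : Finset α → ℝ := fun S => a + ∑ j ∈ S, d j
  have hpair : ∀ S ⊆ t, g S + g (t \ S) = 2 * a + ∑ j ∈ t, d j := by
    intro S hS
    simp only [g, ← sum_sdiff hS]
    ring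
  have : 2 * shapleyMean t g = 2 * a + ∑ j ∈ t, d j := by
    calc 2 * shapleyMean t g = shapleyMean t g + shapleyMean t (fun S => g (t \ S)) := by
          rw [shapleyMean_comp_sdiff]; ring
      _ = shapleyMean t (fun _ => 2 * a + ∑ j ∈ t, d j) := by
          rw [← shapleyMean_add]; exact shapleyMean_congr hpair
      _ = 2 * a + ∑ j ∈ t, d j := shapleyMean_const _
  linarith

lemma integral_shapleyMean {Ω : Type*} [MeasurableSpace Ω] {μ : Measure Ω}
    (g : Finset α → Ω → ℝ) (hg : ∀ S, Integrable (g S) μ) :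
    ∫ ω, shapleyMean t (fun S => g S ω) ∂μ = shapleyMean t (fun S => ∫ ω, g S ω ∂μ) := by
  have hsum : ∀ k, Integrable (fun ω => ∑ S ∈ t.powersetCard k, g S ω) μ :=
    fun k => integrable_finsetSum _ fun S _ => hg S
  simp only [shapleyMean]
  rw [integral_const_mul, integral_finsetSum _ fun k _ => (hsum k).const_mul _]
  simp only [integral_const_mul, integral_finsetSum _ fun S _ => hg S]

end ShapleyMean

lemma SV_eq_shapleyMean {M : ℕ} (f : (Fin M → ℝ) → ℝ) (P : Measure (Fin M → ℝ))
    (xt : Fin M → ℝ) (i : Fin M) :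
    SV f P xt i = shapleyMean (univ.erase i)
      (fun S => condSub f P xt (insert i S) - condSub f P xt S) := by
  have hcard : #(univ.erase i) = M - 1 := by simp
  rw [SV, shapleyMean, hcard, Nat.sub_add_cancel i.pos, one_div]

section Quadratic

variable {M : ℕ} (c : ℝ) (b : Fin M → ℝ) {A : Matrix (Fin M) (Fin M) ℝ}

lemma quadf_eq_dotProduct (x : Fin M → ℝ) :
    quadf c b A x = c + b ⬝ᵥ x + 1 / 2 * (x ⬝ᵥ A *ᵥ x) := by
  simp only [quadf, dotProduct, mulVec, Finset.mul_sum, mul_assoc]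

lemma quadf_add (hA : A.IsSymm) (x h : Fin M → ℝ) :
    quadf c b A (x + h) = quadf c b A x + (b + A *ᵥ x) ⬝ᵥ h + 1 / 2 * (h ⬝ᵥ A *ᵥ h) := by
  have hsym : x ⬝ᵥ A *ᵥ h = A *ᵥ x ⬝ᵥ h := by
    rw [dotProduct_mulVec, ← mulVec_transpose, hA.eq]
  simp only [quadf_eq_dotProduct, dotProduct_add, add_dotProduct, mulVec_add, hsym,
    dotProduct_comm h (A *ᵥ x)]
  ring

lemma quadf_add_single (hA : A.IsSymm) (x : Fin M → ℝ) (i : Fin M) (d : ℝ) :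
    quadf c b A (x + Pi.single i d) =
      quadf c b A x + d * (b i + (A *ᵥ x) i) + A i i * d ^ 2 / 2 := by
  rw [quadf_add c b hA, dotProduct_single, single_dotProduct, mulVec_single]
  simp only [Pi.add_apply, Pi.smul_apply, col_apply, MulOpposite.smul_eq_mul_unop,
    MulOpposite.unop_op]
  ring

lemma partialDeriv'_quadf (hA : A.IsSymm) (i : Fin M) (x : Fin M → ℝ) :
    partialDeriv' (quadf c b A) i x = b i + (A *ᵥ x) i := by
  have hline : HasDerivAt (fun t : ℝ => quadf c b A (x + t • Pi.single i 1))
      (b i + (A *ᵥ x) i) 0 := by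
    have hsmul : ∀ t : ℝ, t • Pi.single i (1 : ℝ) = Pi.single i t := fun t => by
      rw [← Pi.single_smul', smul_eq_mul, mul_one]
    have heq : (fun t : ℝ => quadf c b A (x + t • Pi.single i 1)) =
        fun t => quadf c b A x + t * (b i + (A *ᵥ x) i) + A i i * t ^ 2 / 2 := by
      funext t
      rw [hsmul, quadf_add_single c b hA]
    rw [heq]
    simpa using ((hasDerivAt_id' (0 : ℝ)).mul_const (b i + (A *ᵥ x) i)).const_add _
      |>.fun_add (((hasDerivAt_pow 2 (0 : ℝ)).const_mul (A i i)).div_const 2)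
  have hdiff : Differentiable ℝ (quadf c b A) := by
    unfold quadf
    fun_prop
  exact ((hdiff x).hasFDerivAt.hasLineDerivAt _).unique hline

lemma integral_zero_one_add_mul (p q : ℝ) : ∫ α in (0 : ℝ)..1, (p + α * q) = p + q / 2 := by
  simp [div_eq_inv_mul]

lemma IG_quadf (hA : A.IsSymm) (xt x : Fin M → ℝ) (i : Fin M) :
    IG (quadf c b A) xt x i =
      (xt i - x i) * (b i + (A *ᵥ x) i + (A *ᵥ (xt - x)) i / 2) := by
  simp only [IG, partialDeriv'_quadf c b hA, mulVec_add, mulVec_smul, Pi.add_apply,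
    Pi.smul_apply, smul_eq_mul, ← add_assoc, integral_zero_one_add_mul]

lemma subst_insert_eq_add_single (xt x : Fin M → ℝ) {i : Fin M} {S : Finset (Fin M)}
    (hi : i ∉ S) :
    subst xt x (insert i S) = subst xt x S + Pi.single i (xt i - x i) := by
  funext j
  rcases eq_or_ne j i with rfl | hj
  · simp [subst, hi]
  · simp [subst, hj]

lemma mulVec_subst_apply (xt x : Fin M → ℝ) (S : Finset (Fin M)) (i : Fin M) :
    (A *ᵥ subst xt x S) i = (A *ᵥ x) i + ∑ j ∈ S, A i j * (xt j - x j) := by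
  have : subst xt x S = x + fun j => if j ∈ S then xt j - x j else 0 := by
    funext j
    by_cases hj : j ∈ S <;> simp [subst, hj]
  rw [this, mulVec_add, Pi.add_apply]
  simp only [mulVec, dotProduct, mul_ite, mul_zero, sum_ite_mem, univ_inter]

lemma quadf_subst_insert_sub (hA : A.IsSymm) (xt x : Fin M → ℝ) {i : Fin M}
    {S : Finset (Fin M)} (hi : i ∉ S) :
    quadf c b A (subst xt x (insert i S)) - quadf c b A (subst xt x S) =
      (xt i - x i) * (b i + (A *ᵥ x) i + A i i * (xt i - x i) / 2) +
        ∑ j ∈ S, (xt i - x i) * (A i j * (xt j - x j)) := by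
  rw [subst_insert_eq_add_single xt x hi, quadf_add_single c b hA, mulVec_subst_apply,
    ← mul_sum]
  ring

lemma shapleyMean_quadf_subst_eq_IG (hA : A.IsSymm) (xt x : Fin M → ℝ) (i : Fin M) :
    shapleyMean (univ.erase i)
        (fun S => quadf c b A (subst xt x (insert i S)) - quadf c b A (subst xt x S)) =
      IG (quadf c b A) xt x i := by
  have hdiag : (A *ᵥ (xt - x)) i =
      A i i * (xt i - x i) + ∑ j ∈ univ.erase i, A i j * (xt j - x j) :=
    (add_sum_erase _ (fun j => A i j * (xt - x) j) (mem_univ i)).symm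
  rw [shapleyMean_congr fun S hS => quadf_subst_insert_sub c b hA xt x
      fun hiS => (mem_erase.1 (hS hiS)).1 rfl,
    shapleyMean_const_add_sum, IG_quadf c b hA, hdiag, ← mul_sum]
  ring

lemma integrable_quadf_subst {P : Measure (Fin M → ℝ)} [IsFiniteMeasure P]
    (hmom1 : ∀ i : Fin M, Integrable (fun x : Fin M → ℝ => x i) P)
    (hmom2 : ∀ i j : Fin M, Integrable (fun x : Fin M → ℝ => x i * x j) P)
    (xt : Fin M → ℝ) (T : Finset (Fin M)) :
    Integrable (fun x => quadf c b A (subst xt x T)) P := by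
  have h1 : ∀ j, Integrable (fun x => subst xt x T j) P := by
    intro j
    unfold subst
    split_ifs
    exacts [integrable_const _, hmom1 j]
  have h2 : ∀ j k, Integrable (fun x => subst xt x T j * subst xt x T k) P := by
    intro j k
    unfold subst
    split_ifs
    exacts [integrable_const _, (hmom1 k).const_mul _, (hmom1 j).mul_const _, hmom2 j k]
  unfold quadf
  refine ((integrable_const c).add (integrable_finsetSum _ fun j _ => (h1 j).const_mul (b j))).add
    ((integrable_finsetSum _ fun j _ => integrable_finsetSum _ fun k _ => ?_).const_mul _)
  exact ((h2 j k).mul_const (A j k)).congr (.of_forall fun x => mul_right_comm _ _ _)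

end Quadratic

/-- for a quadratic polynomial `f(x) = c + bᵀx + ½ xᵀA x` with `A` symmetric
and a probability measure `P` with finite second moments, the Shapley value equals the
expected integrated gradient: `SV_i(x^t) = EIG_i(x^t)` for every test point and coordinate. -/
theorem sv_eq_eig_quadratic {M : ℕ} (c : ℝ) (b : Fin M → ℝ)
    (A : Matrix (Fin M) (Fin M) ℝ) (hA : A.IsSymm)
    (P : Measure (Fin M → ℝ)) [IsProbabilityMeasure P]
    (hmom1 : ∀ i : Fin M, Integrable (fun x : Fin M → ℝ => x i) P)
    (hmom2 : ∀ i j : Fin M, Integrable (fun x : Fin M → ℝ => x i * x j) P)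
    (xt : Fin M → ℝ) (i : Fin M) :
    SV (quadf c b A) P xt i = EIG (quadf c b A) P xt i := by
  have hint : ∀ T, Integrable (fun x => quadf c b A (subst xt x T)) P :=
    integrable_quadf_subst c b hmom1 hmom2 xt
  calc SV (quadf c b A) P xt i
      = shapleyMean (univ.erase i) (fun S =>
          ∫ x, quadf c b A (subst xt x (insert i S)) - quadf c b A (subst xt x S) ∂P) := by
        simp only [SV_eq_shapleyMean, condSub, integral_sub (hint _) (hint _)]
    _ = ∫ x, shapleyMean (univ.erase i) (fun S =>
          quadf c b A (subst xt x (insert i S)) - quadf c b A (subst xt x S)) ∂P :=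
        (integral_shapleyMean _ fun S => (hint _).sub (hint _)).symm
    _ = EIG (quadf c b A) P xt i := by
        simp only [shapleyMean_quadf_subst_eq_IG c b hA, EIG]
end

section
/- Let f : ℝ^M → ℝ be twice continuously differentiable and fix a test point x^t ∈ ℝ^M and an index i. Regarding IG_i(x^t | x⁰) as a function of the test point x^t, its partial derivative with respect to x_i^t converges to the i-th partial derivative of f at x^t as the baseline approaches the test point: lim_{x⁰ → x^t} ∂IG_i(x^t | x⁰)/∂x_i^t = ∂f(x^t)/∂x_i. (This identifies the local limit of the derivative of IG with the local-linear (LIME) attribution, which estimates the local gradient of f at x^t.) -/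
open MeasureTheory Finset Filter

/-!
The map `(x⁰, x) ↦ IG_i(x | x⁰)` is jointly `C¹`: its integrand is built from the `C¹` function
`∂f/∂x_i`, and a parametric integral over `[0, 1]` of a `C¹` function is `C¹` (differentiation
under the integral sign, dominated by compactness). Hence the partial derivative in `x` at `x^t`
depends continuously on the baseline `x⁰`. At `x⁰ = x^t` the factor `x_i - x_i⁰` vanishes at
`x^t`, so the product rule leaves `∫₀¹ ∂f/∂x_i (x^t) dα = ∂f/∂x_i (x^t)`.
-/

open Function Topology

theorem IsCompact.exists_eventually_forall_norm_le {X Y E : Type*} [TopologicalSpace X]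
    [TopologicalSpace Y] [SeminormedAddCommGroup E] {K : Set Y} (hK : IsCompact K)
    {F : X → Y → E} (hF : Continuous (uncurry F)) (x₀ : X) :
    ∃ C, ∀ᶠ x in 𝓝 x₀, ∀ t ∈ K, ‖F x t‖ ≤ C := by
  obtain ⟨C, hC⟩ :=
    hK.exists_bound_of_continuousOn (hF.comp (Continuous.prodMk_right x₀)).continuousOn
  refine ⟨C + 1, hK.eventually_forall_of_forall_eventually fun t ht => ?_⟩
  have hlt : ‖uncurry F (x₀, t)‖ < C + 1 := (hC t ht).trans_lt (lt_add_one C)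
  filter_upwards [(hF.norm.tendsto (x₀, t)).eventually (gt_mem_nhds hlt)] with z hz
  exact hz.le

theorem ContDiff.continuous_uncurry_fderiv_left {𝕜 X Y E : Type*} [NontriviallyNormedField 𝕜]
    [NormedAddCommGroup X] [NormedSpace 𝕜 X] [NormedAddCommGroup Y] [NormedSpace 𝕜 Y]
    [NormedAddCommGroup E] [NormedSpace 𝕜 E] {F : X → Y → E} (hF : ContDiff 𝕜 1 (uncurry F)) :
    Continuous (uncurry fun x y => fderiv 𝕜 (F · y) x) :=
  (ContDiff.fderiv (f := fun (p : X × Y) x => F x p.2)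
    (hF.comp (contDiff_snd.prodMk (contDiff_snd.comp contDiff_fst))) contDiff_fst
    (zero_add 1).le).continuous

section ParametricIntegral

variable {H E : Type*} [NormedAddCommGroup H] [NormedSpace ℝ H]
  [NormedAddCommGroup E] [NormedSpace ℝ E]

theorem hasFDerivAt_intervalIntegral_of_contDiff {F : H → ℝ → E}
    (hF : ContDiff ℝ 1 (uncurry F)) (a b : ℝ) (x₀ : H) :
    HasFDerivAt (fun x => ∫ t in a..b, F x t) (∫ t in a..b, fderiv ℝ (F · t) x₀) x₀ := by
  have hF' := hF.continuous_uncurry_fderiv_left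
  have hFt : ∀ t, Differentiable ℝ (F · t) := fun t =>
    (hF.comp (contDiff_id.prodMk contDiff_const)).differentiable one_ne_zero
  obtain ⟨C, hC⟩ := isCompact_uIcc.exists_eventually_forall_norm_le hF' x₀
  refine intervalIntegral.hasFDerivAt_integral_of_dominated_of_fderiv_le (μ := volume)
    (F' := fun x t => fderiv ℝ (F · t) x) (bound := fun _ => C)
    hC ?_ ?_ ?_ ?_ intervalIntegrable_const ?_
  · exact Eventually.of_forall fun x =>
      (hF.continuous.comp (Continuous.prodMk_right x)).aestronglyMeasurable
  · exact (hF.continuous.comp (Continuous.prodMk_right x₀)).intervalIntegrable a b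
  · exact (hF'.comp (Continuous.prodMk_right x₀)).aestronglyMeasurable
  · exact Eventually.of_forall fun t ht x hx => hx t (Set.uIoc_subset_uIcc ht)
  · exact Eventually.of_forall fun t _ x _ => (hFt t x).hasFDerivAt

theorem contDiff_one_intervalIntegral {F : H → ℝ → E} (hF : ContDiff ℝ 1 (uncurry F)) (a b : ℝ) :
    ContDiff ℝ 1 fun x => ∫ t in a..b, F x t :=
  contDiff_one_iff_hasFDerivAt.2 ⟨fun x => ∫ t in a..b, fderiv ℝ (F · t) x,
    intervalIntegral.continuous_parametric_intervalIntegral_of_continuous'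
      hF.continuous_uncurry_fderiv_left a b,
    hasFDerivAt_intervalIntegral_of_contDiff hF a b⟩

theorem contDiff_one_integral_comp_segment {g : H → E} (hg : ContDiff ℝ 1 g) :
    ContDiff ℝ 1 fun p : H × H => ∫ α in (0:ℝ)..1, g (p.1 + α • (p.2 - p.1)) :=
  contDiff_one_intervalIntegral (F := fun (p : H × H) α => g (p.1 + α • (p.2 - p.1)))
    (hg.comp (by fun_prop)) 0 1

end ParametricIntegral

variable {M : ℕ} {f : (Fin M → ℝ) → ℝ}

theorem ContDiff.partialDeriv' {n : WithTop ℕ∞} (hf : ContDiff ℝ (n + 1) f) (i : Fin M) :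
    ContDiff ℝ n (partialDeriv' f i) :=
  (hf.fderiv_right le_rfl).clm_apply contDiff_const

theorem contDiff_uncurry_IG (hf : ContDiff ℝ 2 f) (i : Fin M) :
    ContDiff ℝ 1 (uncurry fun x0 x => IG f x x0 i) :=
  (by fun_prop : ContDiff ℝ 1 fun p : (Fin M → ℝ) × (Fin M → ℝ) => p.2 i - p.1 i).mul
    (contDiff_one_integral_comp_segment (hf.partialDeriv' i))

theorem fderiv_IG_self_apply (hf : ContDiff ℝ 2 f) (xt v : Fin M → ℝ) (i : Fin M) :
    fderiv ℝ (fun x => IG f x xt i) xt v = v i * partialDeriv' f i xt := by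
  have hint : HasFDerivAt (fun x => ∫ α in (0:ℝ)..1, partialDeriv' f i (xt + α • (x - xt)))
      _ xt :=
    (((contDiff_one_integral_comp_segment (hf.partialDeriv' i)).differentiable one_ne_zero).comp
      ((differentiable_const xt).prodMk differentiable_id) xt).hasFDerivAt
  have hlin : HasFDerivAt (fun x : Fin M → ℝ => x i - xt i)
      (ContinuousLinearMap.proj (R := ℝ) (φ := fun _ : Fin M => ℝ) i) xt :=
    (ContinuousLinearMap.proj (R := ℝ) (φ := fun _ : Fin M => ℝ) i).hasFDerivAt.sub_const _
  have hIG : (fun x => IG f x xt i) = (fun x => x i - xt i) *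
      fun x => ∫ α in (0:ℝ)..1, partialDeriv' f i (xt + α • (x - xt)) := rfl
  rw [hIG, (hlin.mul hint).fderiv]
  simp [mul_comm]

/-- regarding `IG_i(x^t | x⁰)` as a function of the test point `x^t`, its
partial derivative with respect to `x_i^t` converges to `∂f(x^t)/∂x_i` as the baseline
`x⁰` approaches the test point; this local limit is the LIME (local-gradient) attribution. -/
theorem deriv_ig_tendsto_gradient {M : ℕ} (f : (Fin M → ℝ) → ℝ) (hf : ContDiff ℝ 2 f)
    (xt : Fin M → ℝ) (i : Fin M) :
    Tendsto (fun x0 : Fin M → ℝ => fderiv ℝ (fun x : Fin M → ℝ => IG f x x0 i) xt (Pi.single i 1))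
      (nhds xt) (nhds (fderiv ℝ f xt (Pi.single i 1))) := by
  have hcont : Continuous fun x0 => fderiv ℝ (fun x => IG f x x0 i) xt :=
    ((contDiff_uncurry_IG hf i).fderiv contDiff_const (zero_add 1).le).continuous
  have hlim := (hcont.clm_apply (continuous_const (y := Pi.single i (1 : ℝ)))).tendsto xt
  rwa [fderiv_IG_self_apply hf, Pi.single_eq_same, one_mul] at hlim
end

section
/- Let f : ℝ^M → ℝ be continuously differentiable with bounded gradient, i.e., there exists L ≥ 0 with |∂f(x)/∂x_j| ≤ L for all x and j. For η > 0, let P_η be the Gaussian measure N(x^t, η·I_M) centered at the test point x^t with covariance η times the identity. Then the expected integrated gradient with respect to P_η vanishes in the local limit: for every i, lim_{η → 0⁺} EIG_i(x^t) = 0, where EIG_i(x^t) = ∫ IG_i(x^t | x⁰) dP_η(x⁰). -/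
open MeasureTheory Filter ProbabilityTheory

/-- The Gaussian measure `N(x^t, η I_M)` on `ℝ^M`: the product of one-dimensional
Gaussians with mean `x^t_j` and variance `η`. -/
noncomputable def gaussPi {M : ℕ} (xt : Fin M → ℝ) (η : ℝ) : Measure (Fin M → ℝ) :=
  Measure.pi fun j => gaussianReal (xt j) η.toNNReal

/-!
The integrated gradient is bounded by `L |x⁰ᵢ - xᵗᵢ|`, so the expected integrated gradient
is at most `L` times the mean absolute deviation of the `i`-th marginal of `N(xᵗ, η I)`,
which by Jensen's inequality is at most `√η`.
-/

open scoped NNReal Topology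

lemma integral_abs_sub_integral_le_sqrt_variance {Ω : Type*} [MeasurableSpace Ω]
    {μ : Measure Ω} [IsProbabilityMeasure μ] {X : Ω → ℝ} (hX : MemLp X 2 μ) :
    ∫ ω, |X ω - μ[X]| ∂μ ≤ √(Var[X; μ]) := by
  have hY : MemLp (fun ω => |X ω - μ[X]|) 2 μ := (hX.sub (memLp_const _)).abs
  have hsq : μ[(fun ω => |X ω - μ[X]|) ^ 2] = Var[X; μ] := by
    simp [variance_eq_integral hX.aemeasurable, sq_abs]
  refine Real.le_sqrt_of_sq_le ?_
  have hvar := variance_nonneg (fun ω => |X ω - μ[X]|) μ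
  rw [variance_eq_sub hY, hsq] at hvar
  linarith

lemma integral_abs_sub_le_sqrt_gaussianReal (m : ℝ) (v : ℝ≥0) :
    ∫ x, |x - m| ∂gaussianReal m v ≤ √(v : ℝ) := by
  simpa [integral_id_gaussianReal] using
    integral_abs_sub_integral_le_sqrt_variance (memLp_id_gaussianReal (μ := m) (v := v) 2)

lemma integrable_abs_sub_gaussianReal (m : ℝ) (v : ℝ≥0) :
    Integrable (fun x => |x - m|) (gaussianReal m v) :=
  ((memLp_id_gaussianReal 1).integrable le_rfl |>.sub (integrable_const m)).abs

lemma Real.sqrt_coe_toNNReal (x : ℝ) : √(x.toNNReal : ℝ) = √x := by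
  rcases le_total 0 x with hx | hx
  · rw [Real.coe_toNNReal x hx]
  · rw [Real.toNNReal_of_nonpos hx, NNReal.coe_zero, Real.sqrt_zero,
      Real.sqrt_eq_zero_of_nonpos hx]

lemma abs_IG_le {M : ℕ} {f : (Fin M → ℝ) → ℝ} {i : Fin M} {L : ℝ}
    (hgrad : ∀ x, |fderiv ℝ f x (Pi.single i 1)| ≤ L) (xt x0 : Fin M → ℝ) :
    |IG f xt x0 i| ≤ L * |x0 i - xt i| := by
  have hint : |∫ α in (0 : ℝ)..1, partialDeriv' f i (x0 + α • (xt - x0))| ≤ L := by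
    simpa using intervalIntegral.norm_integral_le_of_norm_le_const (a := 0) (b := 1)
      (f := fun α => partialDeriv' f i (x0 + α • (xt - x0)))
      fun α _ => (Real.norm_eq_abs _).trans_le (hgrad _)
  rw [IG, abs_mul, abs_sub_comm, mul_comm]
  exact mul_le_mul_of_nonneg_right hint (abs_nonneg _)

lemma norm_integral_IG_gaussPi_le {M : ℕ} {f : (Fin M → ℝ) → ℝ} {i : Fin M} {L : ℝ}
    (hL : 0 ≤ L) (hgrad : ∀ x, |fderiv ℝ f x (Pi.single i 1)| ≤ L)
    (xt : Fin M → ℝ) (η : ℝ) :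
    ‖∫ x0, IG f xt x0 i ∂gaussPi xt η‖ ≤ L * √η := by
  have hbound := (integrable_comp_eval (i := i) (μ := fun j => gaussianReal (xt j) η.toNNReal)
    (integrable_abs_sub_gaussianReal (xt i) η.toNNReal)).const_mul L
  calc ‖∫ x0, IG f xt x0 i ∂gaussPi xt η‖
      ≤ ∫ x0, L * |x0 i - xt i| ∂gaussPi xt η :=
        norm_integral_le_of_norm_le hbound (Eventually.of_forall fun x0 =>
          (Real.norm_eq_abs _).trans_le (abs_IG_le hgrad xt x0))
    _ = L * ∫ y, |y - xt i| ∂gaussianReal (xt i) η.toNNReal := by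
        rw [integral_const_mul, gaussPi, integral_comp_eval (X := fun _ => ℝ) (i := i)
          (f := fun y => |y - xt i|) (by fun_prop)]
    _ ≤ L * √η := by
        gcongr
        rw [← Real.sqrt_coe_toNNReal]
        exact integral_abs_sub_le_sqrt_gaussianReal (xt i) η.toNNReal

theorem eig_vanishes_in_local_limit_general {M : ℕ} (f : (Fin M → ℝ) → ℝ)
    (L : ℝ) (hL : 0 ≤ L)
    (hgrad : ∀ (x : Fin M → ℝ) (j : Fin M), |fderiv ℝ f x (Pi.single j 1)| ≤ L)
    (xt : Fin M → ℝ) (i : Fin M) :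
    Tendsto (fun η : ℝ => ∫ x0, IG f xt x0 i ∂(gaussPi xt η))
      (nhdsWithin 0 (Set.Ioi 0)) (nhds 0) := by
  have hlim : Tendsto (fun η : ℝ => L * √η) (𝓝[>] 0) (𝓝 0) := by
    simpa using ((Real.continuous_sqrt.tendsto 0).const_mul L).mono_left nhdsWithin_le_nhds
  exact squeeze_zero_norm (fun η => norm_integral_IG_gaussPi_le hL (hgrad · i) xt η) hlim

/-- for `f` continuously differentiable with gradient bounded by `L`, the
expected integrated gradient with respect to the Gaussian `N(x^t, η I_M)` centered at the
test point vanishes in the local limit `η → 0⁺`. -/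
theorem eig_vanishes_in_local_limit {M : ℕ} (f : (Fin M → ℝ) → ℝ) (hf : ContDiff ℝ 1 f)
    (L : ℝ) (hL : 0 ≤ L)
    (hgrad : ∀ (x : Fin M → ℝ) (j : Fin M), |fderiv ℝ f x (Pi.single j 1)| ≤ L)
    (xt : Fin M → ℝ) (i : Fin M) :
    Tendsto (fun η : ℝ => ∫ x0, IG f xt x0 i ∂(gaussPi xt η))
      (nhdsWithin 0 (Set.Ioi 0)) (nhds 0) :=
  eig_vanishes_in_local_limit_general f L hL hgrad xt i
end
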